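/- arXiv:1910.01107 — 5 statements merged into one kernel-verified Lean document; each statement's English description precedes it below -/
import Mathlib

section
/- For complex s with 0 < Re(s) < 1/2, the Lebesgue integral over ℂ of the 2-form (1/(2πi)) |z|^{2s} · (-dz/(z(1-z))) ∧ (dz̄/z̄) converges and equals 1/s. -/
open MeasureTheory

open Set Real

theorem integrableOn_polar_iff {E : Type*} [NormedAddCommGroup E] [NormedSpace ℝ E]
    (f : ℝ × ℝ → E) :
    IntegrableOn (fun p => p.1 • f (polarCoord.symm p)) polarCoord.target volume ↔
      Integrable f volume := by
  set B : ℝ × ℝ → ℝ × ℝ →L[ℝ] ℝ × ℝ := fun p =>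
    LinearMap.toContinuousLinearMap (Matrix.toLin (Module.Basis.finTwoProd ℝ) (Module.Basis.finTwoProd ℝ)
      !![Real.cos p.2, -p.1 * Real.sin p.2; Real.sin p.2, p.1 * Real.cos p.2])
  have A : ∀ p ∈ polarCoord.target, HasFDerivWithinAt polarCoord.symm (B p) polarCoord.target p :=
    fun p _ => (hasFDerivAt_polarCoord_symm p).hasFDerivWithinAt
  have B_det : ∀ p, (B p).det = p.1 := by
    intro p
    conv_rhs => rw [← one_mul p.1, ← Real.cos_sq_add_sin_sq p.2]
    simp only [B, neg_mul, LinearMap.det_toContinuousLinearMap, LinearMap.det_toLin,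
      Matrix.det_fin_two_of, sub_neg_eq_add]
    ring
  have h1 : Integrable f volume ↔ IntegrableOn f polarCoord.source volume := by
    rw [IntegrableOn, Measure.restrict_congr_set polarCoord_source_ae_eq_univ,
      Measure.restrict_univ]
  have h2 : polarCoord.source = polarCoord.symm '' polarCoord.target :=
    polarCoord.symm_image_target_eq_source.symm
  rw [h1, h2, integrableOn_image_iff_integrableOn_abs_det_fderiv_smul volume
    polarCoord.open_target.measurableSet A polarCoord.symm.injOn f]
  apply integrableOn_congr_fun _ polarCoord.open_target.measurableSet
  intro p hp
  simp only [B_det, abs_of_pos (a := p.1) hp.1]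

theorem integrableOn_polar_iff' {E : Type*} [NormedAddCommGroup E] [NormedSpace ℝ E]
    (f : ℂ → E) :
    IntegrableOn (fun p : ℝ × ℝ => p.1 • f (Complex.polarCoord.symm p)) polarCoord.target volume ↔
      Integrable f volume := by
  rw [← (Complex.volume_preserving_equiv_real_prod.symm).integrable_comp_emb
    Complex.measurableEquivRealProd.symm.measurableEmbedding, ← integrableOn_polar_iff]
  rfl

theorem integrableOn_fst_polar {g : ℝ → ℝ} (hg : IntegrableOn g (Ioi 0) volume) :
    IntegrableOn (fun p : ℝ × ℝ => g p.1) polarCoord.target volume := by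
  have ht : polarCoord.target = Ioi (0:ℝ) ×ˢ Ioo (-π) π := rfl
  have h1 : IntegrableOn (fun _ : ℝ => (1:ℝ)) (Ioo (-π) π) volume :=
    integrableOn_const measure_Ioo_lt_top.ne
  have := Integrable.mul_prod hg h1
  rw [IntegrableOn, ht, MeasureTheory.Measure.volume_eq_prod ℝ ℝ, ← Measure.prod_restrict]
  simpa using this

theorem integrableOn_norm_rpow_ball {t R : ℝ} (ht : -2 < t) (hR : 0 < R) :
    IntegrableOn (fun z : ℂ => ‖z‖ ^ t) (Metric.ball 0 R) volume := by
  rw [← integrable_indicator_iff measurableSet_ball, ← integrableOn_polar_iff']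
  have hg : IntegrableOn (fun r : ℝ => (Ioo 0 R).indicator (fun r => r ^ (t+1)) r)
      (Ioi 0) volume := by
    apply Integrable.integrableOn
    rw [integrable_indicator_iff measurableSet_Ioo]
    exact ((intervalIntegral.intervalIntegrable_rpow' (by linarith)).1.mono_set Ioo_subset_Ioc_self)
  refine (integrableOn_fst_polar hg).congr_fun (fun p hp => ?_)
    polarCoord.open_target.measurableSet
  have hp1 : 0 < p.1 := hp.1
  have habs : ‖Complex.polarCoord.symm p‖ = p.1 := by
    rw [Complex.norm_polarCoord_symm, abs_of_pos hp1]
  have hmem : Complex.polarCoord.symm p ∈ Metric.ball (0:ℂ) R ↔ p.1 < R := by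
    rw [Metric.mem_ball, dist_zero_right, habs]
  by_cases h : p.1 < R
  · dsimp only
    rw [indicator_of_mem (Set.mem_Ioo.2 ⟨hp1, h⟩),
      indicator_of_mem (hmem.2 h),
      habs, smul_eq_mul, Real.rpow_add hp1, Real.rpow_one, mul_comm]
  · dsimp only
    rw [indicator_of_notMem (fun hm => h (Set.mem_Ioo.1 hm).2),
      indicator_of_notMem (fun hm => h (hmem.1 hm)), smul_zero]

theorem integrableOn_norm_rpow_compl {t R : ℝ} (ht : t < -2) (hR : 0 < R) :
    IntegrableOn (fun z : ℂ => ‖z‖ ^ t) (Metric.closedBall 0 R)ᶜ volume := by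
  rw [← integrable_indicator_iff measurableSet_closedBall.compl, ← integrableOn_polar_iff']
  have hg : IntegrableOn (fun r : ℝ => (Ioi R).indicator (fun r => r ^ (t+1)) r)
      (Ioi 0) volume := by
    apply Integrable.integrableOn
    rw [integrable_indicator_iff measurableSet_Ioi]
    exact integrableOn_Ioi_rpow_of_lt (by linarith) hR
  refine (integrableOn_fst_polar hg).congr_fun (fun p hp => ?_)
    polarCoord.open_target.measurableSet
  have hp1 : 0 < p.1 := hp.1
  have habs : ‖Complex.polarCoord.symm p‖ = p.1 := by
    rw [Complex.norm_polarCoord_symm, abs_of_pos hp1]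
  have hmem : Complex.polarCoord.symm p ∈ (Metric.closedBall (0:ℂ) R)ᶜ ↔ R < p.1 := by
    rw [mem_compl_iff, Metric.mem_closedBall, dist_zero_right, habs, not_le]
  by_cases h : R < p.1
  · dsimp only
    rw [indicator_of_mem (Set.mem_Ioi.2 h), indicator_of_mem (hmem.2 h),
      habs, smul_eq_mul, Real.rpow_add hp1, Real.rpow_one, mul_comm]
  · dsimp only
    rw [indicator_of_notMem (fun hm => h (Set.mem_Ioi.1 hm)),
      indicator_of_notMem (fun hm => h (hmem.1 hm)), smul_zero]

theorem integrable_G (s : ℂ) (h0 : 0 < s.re) (h1 : s.re < 1 / 2) :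
    Integrable (fun z : ℂ => (‖z‖ : ℂ) ^ (2 * s - 2) * (1 - z)⁻¹) volume := by
  set σ := s.re with hσ
  have hw : (2 * s - 2) ≠ 0 := by
    have : (2 * s - 2).re ≠ 0 := by
      have : (2 * s - 2).re = 2 * σ - 2 := by simp [Complex.sub_re, Complex.mul_re, ← hσ]
      rw [this]; linarith
    exact fun h => this (by rw [h]; simp)
  have hre : (2 * s - 2).re = 2 * σ - 2 := by simp [Complex.sub_re, Complex.mul_re, ← hσ]
  set G := fun z : ℂ => (‖z‖ : ℂ) ^ (2 * s - 2) * (1 - z)⁻¹ with hG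
  have measG : Measurable G := by
    apply Measurable.mul ?_ ((measurable_const.sub measurable_id).inv)
    have heq : (fun z : ℂ => (‖z‖ : ℂ) ^ (2 * s - 2)) =
        fun z => if z = 0 then 0 else Complex.exp (Complex.log (‖z‖ : ℂ) * (2 * s - 2)) := by
      funext z
      by_cases hz : z = 0
      · simp [hz, Complex.zero_cpow hw]
      · rw [if_neg hz, Complex.cpow_def_of_ne_zero
          (by simpa using norm_ne_zero_iff.2 hz : ((‖z‖ : ℂ) ≠ 0))]
    rw [heq]
    exact Measurable.ite (measurableSet_singleton 0) measurable_const
      ((((Complex.measurable_ofReal.comp measurable_norm).clog).mul measurable_const).cexp)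
  have normG : ∀ z : ℂ, z ≠ 0 → ‖G z‖ = ‖z‖ ^ (2 * σ - 2) * ‖1 - z‖⁻¹ := by
    intro z hz
    rw [hG, norm_mul, norm_inv, 
      Complex.norm_cpow_eq_rpow_re_of_pos (norm_pos_iff.2 hz), hre]
  have hae0 : ∀ᵐ z : ℂ ∂volume, z ≠ 0 := by
    refine ae_iff.2 ?_
    simpa using measure_singleton (0 : ℂ)
  have key : ∀ (S : Set ℂ), MeasurableSet S → ∀ g : ℂ → ℝ, IntegrableOn g S volume →
      (∀ z ∈ S, z ≠ 0 → ‖z‖ ^ (2 * σ - 2) * ‖1 - z‖⁻¹ ≤ g z) → IntegrableOn G S volume := by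
    intro S hS g hg hbound
    apply hg.mono' (measG.aestronglyMeasurable.restrict)
    rw [ae_restrict_iff' hS]
    filter_upwards [hae0] with z hz hzS
    rw [normG z hz]
    exact hbound z hzS hz
  have fact1 : ∀ x : ℝ, 1 / 2 ≤ x → x ^ (2 * σ - 2) ≤ 4 := by
    intro x hx
    have e1 : x ^ (2 * σ - 2) ≤ ((1:ℝ)/2) ^ (2 * σ - 2) :=
      Real.rpow_le_rpow_of_nonpos one_half_pos hx (by linarith)
    have e2 : ((1:ℝ)/2) ^ (2 * σ - 2) ≤ ((1:ℝ)/2) ^ (-2 : ℝ) :=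
      Real.rpow_le_rpow_of_exponent_ge one_half_pos (by norm_num) (by linarith)
    have e3 : ((1:ℝ)/2) ^ (-2 : ℝ) = 4 := by
      rw [show (-2 : ℝ) = ((-2 : ℤ) : ℝ) by norm_num, Real.rpow_intCast]
      norm_num
    linarith
  have I1 : IntegrableOn G (Metric.ball (0:ℂ) (1/2)) volume := by
    refine key _ measurableSet_ball (fun z => 2 * ‖z‖ ^ (2 * σ - 2))
      ((integrableOn_norm_rpow_ball (by linarith) one_half_pos).const_mul 2) ?_
    intro z hz _
    rw [Metric.mem_ball, dist_zero_right] at hz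
    have h12 : (1:ℝ)/2 ≤ ‖1 - z‖ := by
      have h := norm_sub_norm_le (1:ℂ) z
      rw [norm_one] at h; linarith
    have hinv : ‖1 - z‖⁻¹ ≤ 2 := by
      calc ‖1 - z‖⁻¹ ≤ ((1:ℝ)/2)⁻¹ := inv_anti₀ one_half_pos h12
        _ = 2 := by norm_num
    calc ‖z‖ ^ (2 * σ - 2) * ‖1 - z‖⁻¹ ≤ ‖z‖ ^ (2 * σ - 2) * 2 :=
          mul_le_mul_of_nonneg_left hinv (Real.rpow_nonneg (norm_nonneg z) _)
      _ = 2 * ‖z‖ ^ (2 * σ - 2) := mul_comm _ _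
  have I2 : IntegrableOn G (Metric.ball (1:ℂ) (1/2)) volume := by
    have base : Integrable
        ((Metric.ball (0:ℂ) (1/2)).indicator (fun z => ‖z‖ ^ (-1 : ℝ))) volume :=
      (integrable_indicator_iff measurableSet_ball).2
        (integrableOn_norm_rpow_ball (by norm_num) one_half_pos)
    have tr := base.comp_sub_right (1:ℂ)
    have hint : IntegrableOn (fun z : ℂ => ‖z - 1‖ ^ (-1 : ℝ)) (Metric.ball 1 (1/2)) volume := by
      rw [← integrable_indicator_iff measurableSet_ball]
      refine tr.congr (Filter.Eventually.of_forall fun z => ?_)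
      by_cases h : z ∈ Metric.ball (1:ℂ) (1/2)
      · have h' : z - 1 ∈ Metric.ball (0:ℂ) (1/2) := by
          simpa [Metric.mem_ball, dist_eq_norm] using h
        simp only [indicator_of_mem h', indicator_of_mem h]
      · have h' : z - 1 ∉ Metric.ball (0:ℂ) (1/2) := by
          simpa [Metric.mem_ball, dist_eq_norm] using h
        simp only [indicator_of_notMem h', indicator_of_notMem h]
    refine key _ measurableSet_ball _ (hint.const_mul 4) ?_
    intro z hz _
    rw [Metric.mem_ball, dist_eq_norm] at hz
    have h12 : (1:ℝ)/2 ≤ ‖z‖ := by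
      have h := norm_sub_norm_le (1:ℂ) (1 - z)
      have h2 : ‖(1:ℂ) - (1 - z)‖ = ‖z‖ := by ring_nf
      have h3 : ‖(1:ℂ) - z‖ = ‖z - 1‖ := norm_sub_rev _ _
      rw [h2, norm_one, h3] at h
      linarith
    have hb : ‖z‖ ^ (2 * σ - 2) ≤ 4 := fact1 _ h12
    have hiv : ‖1 - z‖⁻¹ = ‖z - 1‖ ^ (-1 : ℝ) := by
      rw [norm_sub_rev, Real.rpow_neg_one]
    rw [hiv]
    exact mul_le_mul_of_nonneg_right hb (Real.rpow_nonneg (norm_nonneg _) _)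
  have I3 : IntegrableOn G
      (Metric.closedBall (0:ℂ) 2 \ (Metric.ball 0 (1/2) ∪ Metric.ball 1 (1/2))) volume := by
    refine key _ (measurableSet_closedBall.diff (measurableSet_ball.union measurableSet_ball))
      (fun _ => 8) (integrableOn_const (ne_of_lt
        (lt_of_le_of_lt (measure_mono diff_subset) measure_closedBall_lt_top))) ?_
    intro z hz _
    have hz0 : (1:ℝ)/2 ≤ ‖z‖ := by
      have := hz.2
      rw [mem_union] at this
      push_neg at this
      have h := this.1
      rw [Metric.mem_ball, dist_zero_right, not_lt] at h
      exact h
    have hz1 : (1:ℝ)/2 ≤ ‖1 - z‖ := by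
      have := hz.2
      rw [mem_union] at this
      push_neg at this
      have h := this.2
      rw [Metric.mem_ball, dist_eq_norm, not_lt] at h
      rw [norm_sub_rev]
      exact h
    have hb : ‖z‖ ^ (2 * σ - 2) ≤ 4 := fact1 _ hz0
    have hinv : ‖1 - z‖⁻¹ ≤ 2 := by
      calc ‖1 - z‖⁻¹ ≤ ((1:ℝ)/2)⁻¹ := inv_anti₀ one_half_pos hz1
        _ = 2 := by norm_num
    calc ‖z‖ ^ (2 * σ - 2) * ‖1 - z‖⁻¹ ≤ 4 * 2 :=
        mul_le_mul hb hinv (inv_nonneg.2 (norm_nonneg _)) (by norm_num)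
      _ = 8 := by norm_num
  have I4 : IntegrableOn G (Metric.closedBall (0:ℂ) 2)ᶜ volume := by
    refine key _ measurableSet_closedBall.compl (fun z => 2 * ‖z‖ ^ (2 * σ - 3))
      ((integrableOn_norm_rpow_compl (by linarith) two_pos).const_mul 2) ?_
    intro z hz _
    rw [mem_compl_iff, Metric.mem_closedBall, dist_zero_right, not_le] at hz
    have hzpos : (0:ℝ) < ‖z‖ := by linarith
    have h2 : ‖z‖ / 2 ≤ ‖1 - z‖ := by
      have h := norm_sub_norm_le z (1:ℂ)
      rw [norm_one, ← norm_sub_rev] at h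
      linarith
    have hinv : ‖1 - z‖⁻¹ ≤ 2 * ‖z‖⁻¹ := by
      have := inv_anti₀ (by linarith : (0:ℝ) < ‖z‖/2) h2
      calc ‖1 - z‖⁻¹ ≤ (‖z‖/2)⁻¹ := this
        _ = 2 * ‖z‖⁻¹ := by field_simp
    calc ‖z‖ ^ (2 * σ - 2) * ‖1 - z‖⁻¹ ≤ ‖z‖ ^ (2 * σ - 2) * (2 * ‖z‖⁻¹) :=
        mul_le_mul_of_nonneg_left hinv (Real.rpow_nonneg (norm_nonneg z) _)
      _ = 2 * (‖z‖ ^ (2 * σ - 2) * ‖z‖ ^ (-1 : ℝ)) := by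
        rw [Real.rpow_neg_one]; ring
      _ = 2 * ‖z‖ ^ (2 * σ - 3) := by
        rw [← Real.rpow_add hzpos, show 2 * σ - 2 + (-1:ℝ) = 2 * σ - 3 by ring]
  rw [← integrableOn_univ]
  have hcover : (univ : Set ℂ) ⊆ ((Metric.ball (0:ℂ) (1/2) ∪ Metric.ball 1 (1/2)) ∪
      (Metric.closedBall (0:ℂ) 2 \ (Metric.ball 0 (1/2) ∪ Metric.ball 1 (1/2)))) ∪
      (Metric.closedBall (0:ℂ) 2)ᶜ := by
    intro z _
    by_cases h2 : z ∈ Metric.closedBall (0:ℂ) 2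
    · by_cases hb : z ∈ Metric.ball (0:ℂ) (1/2) ∪ Metric.ball 1 (1/2)
      · exact Or.inl (Or.inl hb)
      · exact Or.inl (Or.inr ⟨h2, hb⟩)
    · exact Or.inr h2
  exact (((I1.union I2).union I3).union I4).mono_set hcover

theorem circleInt_aux {r : ℝ} (hr : 0 < r) (hr1 : r ≠ 1) :
    (∫ θ in (0:ℝ)..(2*π), (1 - circleMap 0 r θ)⁻¹) = if r < 1 then (2*π:ℂ) else 0 := by
  have habs : |r| = r := abs_of_pos hr
  have hci0 : CircleIntegrable (fun z => (z - 0)⁻¹) 0 r := by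
    rw [circleIntegrable_sub_inv_iff]
    refine Or.inr ?_
    simpa [habs] using hr.ne
  have hci1 : CircleIntegrable (fun z => (z - 1)⁻¹) 0 r := by
    rw [circleIntegrable_sub_inv_iff]
    refine Or.inr ?_
    simp [habs]
    exact fun h => hr1 h.symm
  have h0 : (∮ z in C(0, r), (z - 0)⁻¹) = 2 * π * Complex.I :=
    circleIntegral.integral_sub_inv_of_mem_ball (by simpa [Metric.mem_ball] using hr)
  have h1 : (∮ z in C(0, r), (z - 1)⁻¹) = if r < 1 then 0 else 2 * π * Complex.I := by
    rcases lt_or_gt_of_ne hr1 with h | h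
    · rw [if_pos h]
      apply Complex.circleIntegral_eq_zero_of_differentiable_on_off_countable hr.le
        countable_empty
      · intro z hz
        apply ContinuousAt.continuousWithinAt
        apply ContinuousAt.inv₀ (by fun_prop)
        intro hc
        have hle : ‖z‖ ≤ r := by simpa [dist_zero_right] using hz
        have hz1 : z = 1 := sub_eq_zero.1 hc
        rw [hz1] at hle; simp at hle; linarith
      · intro z hz
        apply DifferentiableAt.inv (by fun_prop)
        intro hc
        have hz1 : z = 1 := sub_eq_zero.1 hc
        have : ‖z‖ < r := by simpa [dist_zero_right] using hz.1
        rw [hz1] at this; simp at this; linarith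
    · rw [if_neg (by linarith)]
      exact circleIntegral.integral_sub_inv_of_mem_ball (by simpa [Metric.mem_ball] using h)
  have hsub : (∮ z in C(0, r), ((z - 0)⁻¹ - (z - 1)⁻¹)) =
      (if r < 1 then (2*π:ℂ) else 0) * Complex.I := by
    rw [circleIntegral.integral_sub hci0 hci1, h0, h1]
    by_cases h : r < 1 <;> simp [h] <;> ring
  have heq : (∮ z in C(0, r), ((z - 0)⁻¹ - (z - 1)⁻¹)) =
      ∫ θ in (0:ℝ)..(2*π), Complex.I * (1 - circleMap 0 r θ)⁻¹ := by
    rw [circleIntegral]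
    apply intervalIntegral.integral_congr
    intro θ _
    have hw0 : circleMap 0 r θ ≠ 0 := circleMap_ne_center hr.ne'
    have hw1 : circleMap 0 r θ ≠ 1 := by
      intro hc
      have := norm_circleMap_zero r θ
      rw [hc] at this
      simp [habs] at this
      exact hr1 this.symm
    have hw1' : circleMap 0 r θ - 1 ≠ 0 := sub_ne_zero.2 hw1
    have hw1'' : 1 - circleMap 0 r θ ≠ 0 := fun hc => hw1 (sub_eq_zero.1 hc).symm
    simp only [deriv_circleMap, smul_eq_mul, sub_zero]
    field_simp
    ring
  rw [intervalIntegral.integral_const_mul] at heq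
  have key2 : Complex.I * (∫ θ in (0:ℝ)..(2*π), (1 - circleMap 0 r θ)⁻¹) =
      Complex.I * (if r < 1 then (2*π:ℂ) else 0) := by
    rw [← heq, hsub]; ring
  exact mul_left_cancel₀ Complex.I_ne_zero key2

theorem Jval {r : ℝ} (hr : 0 < r) (hr1 : r ≠ 1) :
    (∫ θ in Ioo (-π) π, (1 - circleMap 0 r θ)⁻¹) = if r < 1 then (2*π:ℂ) else 0 := by
  have hper : Function.Periodic (fun θ => (1 - circleMap 0 r θ)⁻¹) (2*π) := by
    intro θ
    simp [periodic_circleMap 0 r θ]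
  have hle : -π ≤ π := by linarith [pi_pos]
  rw [← MeasureTheory.integral_Ioc_eq_integral_Ioo,
    ← intervalIntegral.integral_of_le hle]
  have h := hper.intervalIntegral_add_eq (-π) 0
  rw [show -π + 2*π = π by ring, show (0:ℝ) + 2*π = 2*π by ring] at h
  rw [h]
  exact circleInt_aux hr hr1

theorem integral_G (s : ℂ) (h0 : 0 < s.re) (h1 : s.re < 1 / 2) :
    (∫ z : ℂ, (‖z‖ : ℂ) ^ (2 * s - 2) * (1 - z)⁻¹) = (π : ℂ) / s := by
  have hs0 : s ≠ 0 := fun h => by rw [h] at h0; simp at h0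
  have h2s : (2 * s) ≠ 0 := by simpa using hs0
  set G := fun z : ℂ => (‖z‖ : ℂ) ^ (2 * s - 2) * (1 - z)⁻¹ with hG
  have intG : Integrable G volume := integrable_G s h0 h1
  have intPolar : IntegrableOn (fun p : ℝ × ℝ => p.1 • G (Complex.polarCoord.symm p))
      polarCoord.target volume := (integrableOn_polar_iff' G).2 intG
  rw [← Complex.integral_comp_polarCoord_symm G]
  have htarget : polarCoord.target = Ioi (0:ℝ) ×ˢ Ioo (-π) π := rfl
  rw [htarget] at intPolar ⊢
  rw [Measure.volume_eq_prod] at intPolar ⊢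
  rw [setIntegral_prod _ intPolar]
  -- now : ∫ r in Ioi 0, ∫ θ in Ioo (-π) π, (r,θ).1 • G (polarCoord.symm (r,θ))
  have hsymm : ∀ (r θ : ℝ), Complex.polarCoord.symm (r, θ) = circleMap 0 r θ := by
    intro r θ
    rw [Complex.polarCoord_symm_apply, circleMap, Complex.exp_mul_I]
    push_cast
    ring
  have hinner : ∀ r ∈ Ioi (0:ℝ), r ≠ 1 →
      (∫ θ in Ioo (-π) π, (r, θ).1 • G (Complex.polarCoord.symm (r, θ))) =
        (Ioo (0:ℝ) 1).indicator (fun r => 2 * (π:ℂ) * (r:ℂ) ^ (2 * s - 1)) r := by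
    intro r hr hr1
    rw [mem_Ioi] at hr
    have hrc : ((r:ℂ)) ≠ 0 := by exact_mod_cast hr.ne'
    have step1 : ∀ θ : ℝ, (r, θ).1 • G (Complex.polarCoord.symm (r, θ)) =
        (r:ℂ) * (r:ℂ) ^ (2 * s - 2) * (1 - circleMap 0 r θ)⁻¹ := by
      intro θ
      rw [hsymm r θ, hG]
      simp only [Complex.real_smul]
      have habs : ‖circleMap 0 r θ‖ = r := by
        rw [norm_circleMap_zero, abs_of_pos hr]
      rw [habs]
      ring
    simp only [step1]
    rw [MeasureTheory.integral_const_mul, Jval hr hr1]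
    have hpow : (r:ℂ) * (r:ℂ) ^ (2 * s - 2) = (r:ℂ) ^ (2 * s - 1) := by
      rw [show (2 * s - 1 : ℂ) = (2 * s - 2) + 1 by ring, Complex.cpow_add _ _ hrc,
        Complex.cpow_one]
      ring
    by_cases h : r < 1
    · rw [if_pos h, indicator_of_mem (mem_Ioo.2 ⟨hr, h⟩), hpow]
      ring
    · rw [if_neg h, indicator_of_notMem (fun hm => h (mem_Ioo.1 hm).2)]
      ring
  have hae1 : ∀ᵐ r : ℝ ∂(volume.restrict (Ioi (0:ℝ))), r ≠ 1 := by
    apply ae_restrict_of_ae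
    refine ae_iff.2 ?_
    simpa using measure_singleton (1 : ℝ)
  have hcongr : (∫ r in Ioi (0:ℝ), ∫ θ in Ioo (-π) π,
        (r, θ).1 • G (Complex.polarCoord.symm (r, θ))) =
      ∫ r in Ioi (0:ℝ), (Ioo (0:ℝ) 1).indicator (fun r => 2 * (π:ℂ) * (r:ℂ) ^ (2 * s - 1)) r := by
    apply integral_congr_ae
    filter_upwards [hae1, ae_restrict_mem measurableSet_Ioi] with r hr1 hrI
    exact hinner r hrI hr1
  rw [hcongr, setIntegral_indicator measurableSet_Ioo,
    show Ioi (0:ℝ) ∩ Ioo (0:ℝ) 1 = Ioo (0:ℝ) 1 by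
      rw [inter_eq_right]; exact fun x hx => hx.1,
    MeasureTheory.integral_const_mul]
  have hioo : (∫ r in Ioo (0:ℝ) 1, (r:ℂ) ^ (2 * s - 1)) = 1 / (2 * s) := by
    rw [← MeasureTheory.integral_Ioc_eq_integral_Ioo,
      ← intervalIntegral.integral_of_le (by norm_num : (0:ℝ) ≤ 1)]
    rw [integral_cpow (Or.inl (by simp [Complex.sub_re, Complex.mul_re]; linarith))]
    rw [show (2 * s - 1 + 1 : ℂ) = 2 * s by ring]
    rw [Complex.ofReal_one, Complex.ofReal_zero, Complex.one_cpow, Complex.zero_cpow h2s]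
    ring
  rw [hioo]
  field_simp

theorem F_eq_G (s : ℂ) (h0 : 0 < s.re) : ∀ z : ℂ, z ≠ 0 →
    (‖z‖ : ℂ) ^ (2 * s) / (z * (1 - z) * (starRingEnd ℂ) z) =
      (‖z‖ : ℂ) ^ (2 * s - 2) * (1 - z)⁻¹ := by
  intro z hz
  have hnz : ((‖z‖ : ℝ) : ℂ) ≠ 0 := by
    simpa using norm_ne_zero_iff.2 hz
  have hzc : z * (starRingEnd ℂ) z = ((‖z‖ : ℂ)) ^ (2 : ℕ) := by
    rw [Complex.mul_conj, Complex.normSq_eq_norm_sq]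
    push_cast
    ring
  have hd : z * (1 - z) * (starRingEnd ℂ) z = ((‖z‖ : ℂ)) ^ (2 : ℕ) * (1 - z) := by
    calc z * (1 - z) * (starRingEnd ℂ) z = (z * (starRingEnd ℂ) z) * (1 - z) := by ring
      _ = ((‖z‖ : ℂ)) ^ (2 : ℕ) * (1 - z) := by rw [hzc]
  have hc2 : ((‖z‖ : ℂ)) ^ ((2 : ℂ)) = ((‖z‖ : ℂ)) ^ (2 : ℕ) := by
    rw [show ((2 : ℂ)) = ((2 : ℕ) : ℂ) by norm_num, Complex.cpow_natCast]
  rw [hd, Complex.cpow_sub _ _ hnz, hc2, ← div_div, div_eq_mul_inv]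

/-- **Single-valued version of `1/s = ∫₀¹ x^{s-1}dx`.**  For `0 < Re(s) < 1/2`, the 2-form
`(1/(2πi)) |z|^{2s} (-dz/(z(1-z))) ∧ (dz̄/z̄)` is absolutely integrable over `ℂ` and its
integral equals `1/s`.  Using `dz ∧ dz̄ = -2i·dx∧dy`, this form equals
`(1/π)·|z|^{2s}/(z(1-z)·z̄)` times the Lebesgue measure on `ℂ`. -/
theorem sv_one_over_s (s : ℂ) (h0 : 0 < s.re) (h1 : s.re < 1 / 2) :
    Integrable (fun z : ℂ =>
      (‖z‖ : ℂ) ^ (2 * s) / (z * (1 - z) * (starRingEnd ℂ) z)) volume ∧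
    (1 / (Real.pi : ℂ)) *
      ∫ z : ℂ, (‖z‖ : ℂ) ^ (2 * s) / (z * (1 - z) * (starRingEnd ℂ) z) = 1 / s := by
  have hae0 : ∀ᵐ z : ℂ ∂volume, z ≠ 0 := by
    refine ae_iff.2 ?_
    simpa using measure_singleton (0 : ℂ)
  have haeFG : (fun z : ℂ => (‖z‖ : ℂ) ^ (2 * s) / (z * (1 - z) * (starRingEnd ℂ) z)) =ᵐ[volume]
      (fun z : ℂ => (‖z‖ : ℂ) ^ (2 * s - 2) * (1 - z)⁻¹) := by
    filter_upwards [hae0] with z hz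
    exact F_eq_G s h0 z hz
  have hs0 : s ≠ 0 := fun h => by rw [h] at h0; simp at h0
  have hπ : ((π : ℝ) : ℂ) ≠ 0 := by
    exact_mod_cast Real.pi_ne_zero
  constructor
  · exact (integrable_G s h0 h1).congr haeFG.symm
  · rw [integral_congr_ae haeFG, integral_G s h0 h1]
    field_simp
end

section
/- The complex beta function satisfies β_ℂ(s,t) = -(1/s + 1/t)·β(s,t)/β(-s,-t) for s,t,s+t not integers. -/
lemma gamma_one_sub (z : ℂ) (hz : z ≠ 0) :
    Complex.Gamma (1 - z) = -z * Complex.Gamma (-z) := by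
  have := Complex.Gamma_add_one (-z) (by simpa using hz)
  rw [show (1 : ℂ) - z = -z + 1 by ring, this]

/-- **Single-valued formula for the complex beta function.** With
`β(s,t) = Γ(s)Γ(t)/Γ(s+t)` and `β_ℂ(s,t) = Γ(s)Γ(t)Γ(1-s-t)/(Γ(s+t)Γ(1-s)Γ(1-t))`,
one has `β_ℂ(s,t) = -(1/s + 1/t)·β(s,t)/β(-s,-t)` for `s, t, s+t` not integers. -/
theorem complex_beta_sv_quotient (s t : ℂ)
    (hs : ∀ n : ℤ, s ≠ (n : ℂ)) (ht : ∀ n : ℤ, t ≠ (n : ℂ))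
    (hst : ∀ n : ℤ, s + t ≠ (n : ℂ)) :
    Complex.Gamma s * Complex.Gamma t * Complex.Gamma (1 - s - t) /
        (Complex.Gamma (s + t) * Complex.Gamma (1 - s) * Complex.Gamma (1 - t)) =
      -(1 / s + 1 / t) *
        ((Complex.Gamma s * Complex.Gamma t / Complex.Gamma (s + t)) /
          (Complex.Gamma (-s) * Complex.Gamma (-t) / Complex.Gamma (-s - t))) := by
  have hs0 : s ≠ 0 := by simpa using hs 0
  have ht0 : t ≠ 0 := by simpa using ht 0
  have hst0 : s + t ≠ 0 := by simpa using hst 0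
  have hGst : Complex.Gamma (s + t) ≠ 0 :=
    Complex.Gamma_ne_zero fun m => by simpa using hst (-m)
  have hGns : Complex.Gamma (-s) ≠ 0 :=
    Complex.Gamma_ne_zero fun m => by
      intro h
      exact hs m (by linear_combination -h)
  have hGnt : Complex.Gamma (-t) ≠ 0 :=
    Complex.Gamma_ne_zero fun m => by
      intro h
      exact ht m (by linear_combination -h)
  rw [show (1 : ℂ) - s - t = 1 - (s + t) by ring,
    gamma_one_sub (s + t) hst0, gamma_one_sub s hs0, gamma_one_sub t ht0,
    show -(s + t) = -s - t by ring]
  field_simp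
  ring
end

section
/- The complex beta function admits the expansion β_ℂ(s,t) = (1/s + 1/t)·exp(∑_{n≥3 odd} ((-1)^{n-1}·2ζ(n)/n)·((s+t)^n - s^n - t^n)) for s,t in a punctured neighborhood of (0,0). -/
/-!
Put `R(z) = Γ(1+z)/Γ(1-z)`. By `Γ(1+z) = zΓ(z)` the left-hand side equals
`(1/s + 1/t) · R(s)R(t)/R(s+t)`. Euler's limit formula gives
`R(z) = lim n^{2z} ∏_{m ≤ n+1} (1 - z/m)/(1 + z/m)`; in `R(s)R(t)/R(s+t)` the powers of `n`
cancel, leaving `exp ∑_m (L((s+t)/m) - L(s/m) - L(t/m))` with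
`L(w) = log(1+w) - log(1-w) = ∑_{n odd} 2wⁿ/n`. The linear terms cancel, and for `|s|, |t| < 1/4`
the double series converges absolutely, so summing over `m` first turns `∑_m m⁻ⁿ` into `ζ(n)`.
-/

open Finset Filter Topology

namespace Complex

noncomputable def logRatio (w : ℂ) : ℂ := log (1 + w) - log (1 - w)

theorem hasSum_logRatio {w : ℂ} (hw : ‖w‖ < 1) :
    HasSum (fun k : ℕ => 2 * w ^ (2 * k + 1) / (2 * k + 1)) (logRatio w) := by
  rw [logRatio]
  have h := (hasSum_taylorSeries_neg_log' hw).sub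
    (hasSum_taylorSeries_neg_log' (norm_neg w ▸ hw))
  rw [sub_neg_eq_add, neg_add_eq_sub, sub_neg_eq_add] at h
  have hodd : ∀ n ∉ Set.range (2 * · : ℕ → ℕ),
      w ^ (n + 1) / (n + 1) - (-w) ^ (n + 1) / (n + 1) = 0 := by
    intro n hn
    have : Even (n + 1) := by
      rw [Nat.even_add_one]
      rintro ⟨r, rfl⟩
      exact hn ⟨r, by simp only; ring⟩
    rw [this.neg_pow, sub_self]
  rw [← (mul_right_injective₀ (two_ne_zero' ℕ)).hasSum_iff hodd] at h
  convert h using 2 with k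
  simp only [Function.comp_apply, Odd.neg_pow (⟨k, rfl⟩ : Odd (2 * k + 1))]
  push_cast
  ring

theorem exp_logRatio {w : ℂ} (hw : ‖w‖ < 1) : exp (logRatio w) = (1 + w) / (1 - w) := by
  have h1 : 1 + w ≠ 0 := fun h => by
    rw [add_eq_zero_iff_neg_eq.mp h |>.symm, norm_neg, norm_one] at hw; exact lt_irrefl _ hw
  have h2 : 1 - w ≠ 0 := fun h => by
    rw [(sub_eq_zero.mp h).symm, norm_one] at hw; exact lt_irrefl _ hw
  rw [logRatio, exp_sub, exp_log h1, exp_log h2]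

/-- The coefficient of `ζ(2k+3)` in the exponent. -/
noncomputable def betaCoeff (s t : ℂ) (k : ℕ) : ℂ :=
  2 * ((s + t) ^ (2 * k + 3) - s ^ (2 * k + 3) - t ^ (2 * k + 3)) / (2 * k + 3)

theorem hasSum_betaCoeff_div_pow {s t y : ℂ} (hs : ‖s / y‖ < 1) (ht : ‖t / y‖ < 1)
    (hst : ‖(s + t) / y‖ < 1) :
    HasSum (fun k => betaCoeff s t k / y ^ (2 * k + 3))
      (logRatio ((s + t) / y) - logRatio (s / y) - logRatio (t / y)) := by
  have h := ((hasSum_logRatio hst).sub (hasSum_logRatio hs)).sub (hasSum_logRatio ht)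
  have h1 := (hasSum_nat_add_iff' 1).mpr h
  have hlinear : 2 * ((s + t) / y) ^ (2 * 0 + 1) / (2 * ((0 : ℕ) : ℂ) + 1) -
      2 * (s / y) ^ (2 * 0 + 1) / (2 * ((0 : ℕ) : ℂ) + 1) -
      2 * (t / y) ^ (2 * 0 + 1) / (2 * ((0 : ℕ) : ℂ) + 1) = 0 := by
    push_cast; ring
  rw [sum_range_one, hlinear, sub_zero] at h1
  refine h1.congr_fun fun k => ?_
  simp only [betaCoeff, div_pow]
  push_cast
  ring

theorem norm_betaCoeff_le {s t : ℂ} (hs : ‖s‖ ≤ 1 / 4) (ht : ‖t‖ ≤ 1 / 4) (k : ℕ) :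
    ‖betaCoeff s t k‖ ≤ (1 / 4) ^ k := by
  have hpow : ∀ z : ℂ, ‖z‖ ≤ 1 / 2 → ‖z ^ (2 * k + 3)‖ ≤ (1 / 2) ^ (2 * k + 3) := fun z hz => by
    rw [norm_pow]; gcongr
  have hst : ‖s + t‖ ≤ 1 / 2 := (norm_add_le s t).trans (by linarith)
  have hnum : ‖(s + t) ^ (2 * k + 3) - s ^ (2 * k + 3) - t ^ (2 * k + 3)‖ ≤
      3 * (1 / 2) ^ (2 * k + 3) := by
    linarith [norm_sub_le ((s + t) ^ (2 * k + 3) - s ^ (2 * k + 3)) (t ^ (2 * k + 3)),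
      norm_sub_le ((s + t) ^ (2 * k + 3)) (s ^ (2 * k + 3)),
      hpow _ hst, hpow s (by linarith), hpow t (by linarith)]
  have hden : (1 : ℝ) ≤ ‖(2 * k + 3 : ℂ)‖ := by
    rw [show (2 * k + 3 : ℂ) = ((2 * k + 3 : ℕ) : ℂ) by push_cast; ring, Complex.norm_natCast]
    exact_mod_cast (by omega : 1 ≤ 2 * k + 3)
  calc ‖betaCoeff s t k‖
      = 2 * ‖(s + t) ^ (2 * k + 3) - s ^ (2 * k + 3) - t ^ (2 * k + 3)‖ / ‖(2 * k + 3 : ℂ)‖ := by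
        rw [betaCoeff, norm_div, norm_mul, Complex.norm_ofNat]
    _ ≤ 2 * (3 * (1 / 2) ^ (2 * k + 3)) / 1 := by gcongr
    _ = 3 / 4 * (1 / 4) ^ k := by rw [pow_add, pow_mul]; ring
    _ ≤ (1 / 4) ^ k := by linarith [pow_nonneg (by norm_num : (0 : ℝ) ≤ 1 / 4) k]

theorem norm_natCast_add_one (m : ℕ) : ‖(m : ℂ) + 1‖ = m + 1 := by
  exact_mod_cast Complex.norm_natCast (m + 1)

theorem one_le_norm_natCast_add_one (m : ℕ) : 1 ≤ ‖(m : ℂ) + 1‖ := by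
  rw [norm_natCast_add_one]
  linarith [m.cast_nonneg (α := ℝ)]

theorem summable_betaCoeff_div_pow {s t : ℂ} (hs : ‖s‖ ≤ 1 / 4) (ht : ‖t‖ ≤ 1 / 4) :
    Summable fun p : ℕ × ℕ => betaCoeff s t p.1 / ((p.2 : ℂ) + 1) ^ (2 * p.1 + 3) := by
  have hgeom : Summable fun k : ℕ => (1 / 4 : ℝ) ^ k :=
    summable_geometric_of_lt_one (by norm_num) (by norm_num)
  have hsq : Summable fun m : ℕ => 1 / ((m : ℝ) + 1) ^ 2 := by
    exact_mod_cast (summable_nat_add_iff 1).2 (Real.summable_one_div_nat_pow.2 one_lt_two)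
  refine .of_norm_bounded (hgeom.mul_of_nonneg hsq (fun _ => by positivity) fun _ => by positivity)
    fun ⟨k, m⟩ => ?_
  have hm := one_le_norm_natCast_add_one m
  rw [norm_div, norm_pow]
  calc ‖betaCoeff s t k‖ / ‖(m : ℂ) + 1‖ ^ (2 * k + 3)
      ≤ (1 / 4) ^ k / ‖(m : ℂ) + 1‖ ^ 2 :=
        div_le_div₀ (by positivity) (norm_betaCoeff_le hs ht k) (by positivity)
          (pow_le_pow_right₀ hm (by omega))
    _ = (1 / 4) ^ k * (1 / ((m : ℝ) + 1) ^ 2) := by rw [norm_natCast_add_one]; ring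

theorem hasSum_riemannZeta_nat {k : ℕ} (hk : 1 < k) :
    HasSum (fun m : ℕ => 1 / ((m : ℂ) + 1) ^ k) (riemannZeta k) := by
  have h : Summable fun n : ℕ => 1 / (n : ℂ) ^ k := by
    simpa [cpow_natCast] using
      Complex.summable_one_div_nat_cpow.2 (by exact_mod_cast hk : 1 < ((k : ℂ)).re)
  rw [zeta_nat_eq_tsum_of_gt_one hk]
  simpa [zero_pow (by omega : k ≠ 0)] using (hasSum_nat_add_iff' 1).2 h.hasSum

theorem norm_div_natCast_add_one_le (z : ℂ) (m : ℕ) : ‖z / ((m : ℂ) + 1)‖ ≤ ‖z‖ := by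
  rw [norm_div]
  exact div_le_self (norm_nonneg z) (one_le_norm_natCast_add_one m)

theorem exists_hasSum_betaCoeff_mul_riemannZeta {s t : ℂ} (hs : ‖s‖ < 1 / 4) (ht : ‖t‖ < 1 / 4) :
    ∃ T, HasSum (fun k => betaCoeff s t k * riemannZeta (2 * k + 3)) T ∧
      HasSum (fun m : ℕ => logRatio ((s + t) / (m + 1)) - logRatio (s / (m + 1)) -
        logRatio (t / (m + 1))) T := by
  obtain ⟨T, hT⟩ := summable_betaCoeff_div_pow hs.le ht.le
  have hst : ‖s + t‖ < 1 := (norm_add_le s t).trans_lt (by linarith)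
  have hT' : HasSum (fun p : ℕ × ℕ => betaCoeff s t p.2 / ((p.1 : ℂ) + 1) ^ (2 * p.2 + 3)) T :=
    (Equiv.prodComm ℕ ℕ).hasSum_iff.2 hT
  refine ⟨T, hT.prod_fiberwise fun k => ?_, hT'.prod_fiberwise fun m => ?_⟩
  · have hζ := (hasSum_riemannZeta_nat (by omega : 1 < 2 * k + 3)).mul_left (betaCoeff s t k)
    push_cast at hζ
    exact hζ.congr_fun fun m => (mul_one_div _ _).symm
  · have hlt : ∀ z : ℂ, ‖z‖ < 1 → ‖z / ((m : ℂ) + 1)‖ < 1 := fun z hz =>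
      (norm_div_natCast_add_one_le z m).trans_lt hz
    dsimp only
    exact hasSum_betaCoeff_div_pow (hlt s (by linarith)) (hlt t (by linarith)) (hlt (s + t) hst)

theorem GammaSeq_one_add_div_GammaSeq_one_sub {z : ℂ} (hz : ‖z‖ < 1) {n : ℕ} (hn : n ≠ 0) :
    GammaSeq (1 + z) n / GammaSeq (1 - z) n =
      (n : ℂ) ^ (2 * z) * exp (-∑ j ∈ range (n + 1), logRatio (z / (j + 1))) := by
  have hn' : (n : ℂ) ≠ 0 := Nat.cast_ne_zero.2 hn
  have hre : |z.re| < 1 := (abs_re_le_norm z).trans_lt hz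
  have hpos : ∀ j : ℕ, 1 + z + j ≠ 0 ∧ 1 - z + j ≠ 0 ∧ (j : ℂ) + 1 ≠ 0 := fun j => by
    refine ⟨fun h => ?_, fun h => ?_, Nat.cast_add_one_ne_zero j⟩ <;>
    · have := congrArg re h
      simp only [add_re, sub_re, one_re, natCast_re, zero_re] at this
      linarith [abs_lt.1 hre, (Nat.cast_nonneg j : (0 : ℝ) ≤ j)]
  have hprod : (∏ j ∈ range (n + 1), (1 - z + j)) / ∏ j ∈ range (n + 1), (1 + z + j) =
      exp (-∑ j ∈ range (n + 1), logRatio (z / (j + 1))) := by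
    rw [exp_neg, exp_sum, ← prod_inv_distrib, ← prod_div_distrib]
    refine prod_congr rfl fun j _ => ?_
    rw [exp_logRatio ((norm_div_natCast_add_one_le z j).trans_lt hz)]
    obtain ⟨h₁, h₂, h₃⟩ := hpos j
    rw [show 1 + z / (j + 1) = (1 + z + j) / (j + 1) by field_simp; ring,
      show 1 - z / (j + 1) = (1 - z + j) / (j + 1) by field_simp; ring,
      div_div_div_cancel_right₀ h₃, inv_div]
  have hpow : (n : ℂ) ^ (2 * z) = n ^ (1 + z) / n ^ (1 - z) := by
    rw [← cpow_sub _ _ hn']; ring_nf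
  have hfac : (n.factorial : ℂ) ≠ 0 := Nat.cast_ne_zero.2 n.factorial_ne_zero
  have hP := prod_ne_zero_iff.2 fun j (_ : j ∈ range (n + 1)) => (hpos j).1
  have hQ := prod_ne_zero_iff.2 fun j (_ : j ∈ range (n + 1)) => (hpos j).2.1
  rw [← hprod, GammaSeq, GammaSeq, hpow]
  field_simp [cpow_ne_zero_iff.2 (.inl hn' : (n : ℂ) ≠ 0 ∨ 1 - z = 0)]

noncomputable def gammaRatio (z : ℂ) : ℂ := Gamma (1 + z) / Gamma (1 - z)

theorem Gamma_one_add_ne_zero {z : ℂ} (hz : ‖z‖ < 1) : Gamma (1 + z) ≠ 0 :=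
  Gamma_ne_zero_of_re_pos (by rw [add_re, one_re]; linarith [neg_abs_le z.re, abs_re_le_norm z])

theorem Gamma_one_sub_ne_zero {z : ℂ} (hz : ‖z‖ < 1) : Gamma (1 - z) ≠ 0 := by
  rw [sub_eq_add_neg]
  exact Gamma_one_add_ne_zero (by rwa [norm_neg])

theorem gammaRatio_ne_zero {z : ℂ} (hz : ‖z‖ < 1) : gammaRatio z ≠ 0 :=
  div_ne_zero (Gamma_one_add_ne_zero hz) (Gamma_one_sub_ne_zero hz)

theorem tendsto_GammaSeq_one_add_div_GammaSeq_one_sub {z : ℂ} (hz : ‖z‖ < 1) :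
    Tendsto (fun n => GammaSeq (1 + z) n / GammaSeq (1 - z) n) atTop (𝓝 (gammaRatio z)) :=
  (GammaSeq_tendsto_Gamma _).div (GammaSeq_tendsto_Gamma _) (Gamma_one_sub_ne_zero hz)

theorem gammaRatio_mul_gammaRatio_div_eq_exp {s t T : ℂ} (hs : ‖s‖ < 1) (ht : ‖t‖ < 1)
    (hst : ‖s + t‖ < 1)
    (hT : HasSum (fun m : ℕ => logRatio ((s + t) / (m + 1)) - logRatio (s / (m + 1)) -
      logRatio (t / (m + 1))) T) :
    gammaRatio s * gammaRatio t / gammaRatio (s + t) = exp T := by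
  have hlim := ((tendsto_GammaSeq_one_add_div_GammaSeq_one_sub hs).mul
    (tendsto_GammaSeq_one_add_div_GammaSeq_one_sub ht)).div
    (tendsto_GammaSeq_one_add_div_GammaSeq_one_sub hst) (gammaRatio_ne_zero hst)
  have hexp := (hT.tendsto_sum_nat.comp (tendsto_add_atTop_nat 1)).cexp
  refine tendsto_nhds_unique (hlim.congr' ?_) hexp
  filter_upwards [eventually_ne_atTop 0] with n hn
  have hn' : (n : ℂ) ≠ 0 := Nat.cast_ne_zero.2 hn
  have hpow : ∀ w : ℂ, (n : ℂ) ^ w ≠ 0 := fun w => cpow_ne_zero_iff.2 (.inl hn')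
  simp only [Pi.div_apply, Function.comp_apply]
  rw [GammaSeq_one_add_div_GammaSeq_one_sub hs hn, GammaSeq_one_add_div_GammaSeq_one_sub ht hn,
    GammaSeq_one_add_div_GammaSeq_one_sub hst hn, mul_add, cpow_add _ _ hn', sum_sub_distrib,
    sum_sub_distrib, exp_sub, exp_sub, exp_neg, exp_neg, exp_neg]
  field_simp [hpow]

theorem Gamma_mul_Gamma_mul_Gamma_one_sub_div_eq {s t : ℂ} (hs : s ≠ 0) (ht : t ≠ 0)
    (hst : s + t ≠ 0) :
    Gamma s * Gamma t * Gamma (1 - s - t) / (Gamma (s + t) * Gamma (1 - s) * Gamma (1 - t)) =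
      (1 / s + 1 / t) * (gammaRatio s * gammaRatio t / gammaRatio (s + t)) := by
  rw [gammaRatio, gammaRatio, gammaRatio, add_comm 1 s, add_comm 1 t, add_comm 1 (s + t),
    Gamma_add_one s hs, Gamma_add_one t ht, Gamma_add_one _ hst, sub_sub]
  field_simp
  ring

end Complex

open Complex in
/-- **Laurent expansion of the complex beta function.** With
`β_ℂ(s,t) = Γ(s)Γ(t)Γ(1-s-t)/(Γ(s+t)Γ(1-s)Γ(1-t))`, one has
`β_ℂ(s,t) = (1/s + 1/t)·exp(∑_{n≥3 odd} ((-1)^{n-1}·2ζ(n)/n)·((s+t)^n - s^n - t^n))`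
for `s, t` in a punctured neighbourhood of `(0,0)`; the series over odd `n ≥ 3`
(indexed by `n = 2k+3`, where `(-1)^{n-1} = 1`) converges for `|s|, |t|` small. -/
theorem complex_beta_laurent_expansion :
    ∃ ε > (0 : ℝ), ∀ s t : ℂ, ‖s‖ < ε → ‖t‖ < ε → s ≠ 0 → t ≠ 0 → s + t ≠ 0 →
      Summable (fun k : ℕ =>
        (2 * riemannZeta (2 * k + 3) / (2 * k + 3)) *
          ((s + t) ^ (2 * k + 3) - s ^ (2 * k + 3) - t ^ (2 * k + 3))) ∧
      Complex.Gamma s * Complex.Gamma t * Complex.Gamma (1 - s - t) /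
          (Complex.Gamma (s + t) * Complex.Gamma (1 - s) * Complex.Gamma (1 - t)) =
        (1 / s + 1 / t) *
          Complex.exp (∑' k : ℕ,
            (2 * riemannZeta (2 * k + 3) / (2 * k + 3)) *
              ((s + t) ^ (2 * k + 3) - s ^ (2 * k + 3) - t ^ (2 * k + 3))) := by
  refine ⟨1 / 4, by norm_num, fun s t hs ht hs0 ht0 hst0 => ?_⟩
  obtain ⟨T, hζ, hlog⟩ := exists_hasSum_betaCoeff_mul_riemannZeta hs ht
  replace hζ : HasSum (fun k : ℕ => (2 * riemannZeta (2 * k + 3) / (2 * k + 3)) *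
      ((s + t) ^ (2 * k + 3) - s ^ (2 * k + 3) - t ^ (2 * k + 3))) T :=
    hζ.congr_fun fun k => by rw [betaCoeff]; ring
  have hst : ‖s + t‖ < 1 := (norm_add_le s t).trans_lt (by linarith)
  refine ⟨hζ.summable, ?_⟩
  rw [hζ.tsum_eq, Gamma_mul_Gamma_mul_Gamma_one_sub_div_eq hs0 ht0 hst0,
    gammaRatio_mul_gammaRatio_div_eq_exp (by linarith) (by linarith) hst hlog]
end

section
/- For integers m ≥ 0, n ≥ 1, the integral ∫₀¹ log^m(x)·log^n(1-x) dx/x converges absolutely and equals (-1)^{m+n}·m!·n!·ζ({1}^{n-1}, m+2), where ζ({1}^{n-1},m+2) denotes the multiple zeta value with n-1 leading 1's. -/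
open MeasureTheory Finset

/-- The multiple zeta value `ζ(e₀, …, e_{k-1}) = ∑_{0 < n₀ < ⋯ < n_{k-1}} ∏ nᵢ^{-eᵢ}`. -/
noncomputable def mzv {k : ℕ} (e : Fin k → ℕ) : ℝ :=
  ∑' f : {f : Fin k → ℕ // StrictMono f ∧ ∀ i, 0 < f i},
    ∏ i, ((f.1 i : ℝ) ^ e i)⁻¹

/-- `ζ({1}^{a-1}, b)`: the multiple zeta value of depth `a` whose first `a-1`
entries are `1` and whose last entry is `b`. -/
noncomputable def zetaOnes (a b : ℕ) : ℝ :=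
  mzv (fun i : Fin a => if (i : ℕ) + 1 = a then b else 1)

/-!
Expanding `-log (1 - x) = ∑_{c ≥ 1} x^c / c` and integrating term by term against
`∫₀¹ (-log x)^m x^{S-1} dx = m! / S^{m+1}` (substitute `x = e^{-t}`) gives
`∫₀¹ (-log x)^m (-log (1 - x))^n dx/x = m! ∑_{c ∈ ℕ₊ⁿ} 1 / (c₁⋯cₙ (c₁+⋯+cₙ)^{m+1})`.
The partial fraction identity
`1 / (c₁⋯cₙ) = ∑_{σ ∈ Sₙ} ∏_j 1 / (c_{σ 1} + ⋯ + c_{σ j})`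
splits each summand over the `n!` orderings of `c`, and the partial sums
`c_{σ 1} + ⋯ + c_{σ j}` run bijectively over the strictly increasing positive sequences, so
the series is `n! ζ({1}^{n-1}, m+2)`. Everything is nonnegative and computed in `ℝ≥0∞`;
finiteness follows from `c₁⋯cₙ (c₁+⋯+cₙ) ≥ (c₁⋯cₙ)^{1+1/n}`.
-/

open scoped ENNReal Nat
open Equiv (Perm)

namespace ENNReal

theorem tsum_pi_prod_eq_prod_tsum {β : Type*} : ∀ {n : ℕ} (g : Fin n → β → ℝ≥0∞),
    ∑' k : Fin n → β, ∏ i, g i (k i) = ∏ i, ∑' b, g i b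
  | 0, g => by simp
  | n + 1, g => by
    rw [← (Fin.consEquiv fun _ => β).tsum_eq, ENNReal.tsum_prod', Fin.prod_univ_succ,
      ← tsum_pi_prod_eq_prod_tsum fun i => g i.succ, ← ENNReal.tsum_mul_right]
    simp [Fin.consEquiv, Fin.prod_univ_succ, ENNReal.tsum_mul_left]

theorem inv_prod_eq_sum_perm_prod_inv_sum_Ici : ∀ {n : ℕ} (x : Fin n → ℝ≥0∞),
    (∀ i, x i ≠ 0) → (∀ i, x i ≠ ∞) →
      (∏ i, x i)⁻¹ = ∑ σ : Perm (Fin n), ∏ j, (∑ i ∈ Ici j, x (σ i))⁻¹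
  | 0, x, _, _ => by simp
  | n + 1, x, hx0, hxtop => by
    -- Write `σ = decomposeFin.symm (p, e)` with `p = σ 0`: the `j = 0` factor is always
    -- `(∑ i, x i)⁻¹`, and the others form the same product for `x` with `x p` removed.
    set S := ∑ i, x i
    let y (p : Fin (n + 1)) (i : Fin n) : ℝ≥0∞ := x (Equiv.swap 0 p i.succ)
    have hfactor (p : Fin (n + 1)) (e : Perm (Fin n)) :
        ∏ j, (∑ i ∈ Ici j, x (Perm.decomposeFin.symm (p, e) i))⁻¹ =
          S⁻¹ * ∏ j, (∑ i ∈ Ici j, y p (e i))⁻¹ := by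
      rw [Fin.prod_univ_succ, show Ici (0 : Fin (n + 1)) = univ from Ici_bot, Equiv.sum_comp]
      simp [← Fin.map_succEmb_Ici, y, Perm.decomposeFin_symm_apply_succ, S]
    have hy (p : Fin (n + 1)) : (∏ i, y p i)⁻¹ = x p * (∏ i, x i)⁻¹ := by
      rw [← Equiv.prod_comp (Equiv.swap 0 p), Fin.prod_univ_succ, Equiv.swap_apply_left,
        ENNReal.mul_inv (.inl (hx0 p)) (.inl (hxtop p)), ← mul_assoc,
        ENNReal.mul_inv_cancel (hx0 p) (hxtop p), one_mul]
    have hS : S ≠ 0 := fun h => hx0 0 (sum_eq_zero_iff.1 h 0 (mem_univ 0))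
    have hStop : S ≠ ∞ := by simpa [S, ENNReal.sum_eq_top] using hxtop
    calc (∏ i, x i)⁻¹ = S⁻¹ * ∑ p, x p * (∏ i, x i)⁻¹ := by
          rw [← sum_mul, ← mul_assoc, ENNReal.inv_mul_cancel hS hStop, one_mul]
      _ = ∑ p, ∑ e : Perm (Fin n), S⁻¹ * ∏ j, (∑ i ∈ Ici j, y p (e i))⁻¹ := by
          simp only [mul_sum, ← hy, inv_prod_eq_sum_perm_prod_inv_sum_Ici (y _)
            (fun _ => hx0 _) (fun _ => hxtop _)]
      _ = ∑ σ : Perm (Fin (n + 1)), ∏ j, (∑ i ∈ Ici j, x (σ i))⁻¹ := by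
          rw [← Equiv.sum_comp Perm.decomposeFin.symm, Fintype.sum_prod_type]
          simp only [hfactor]

theorem inv_prod_eq_sum_perm_prod_inv_sum_Iic {n : ℕ} (x : Fin n → ℝ≥0∞)
    (hx0 : ∀ i, x i ≠ 0) (hxtop : ∀ i, x i ≠ ∞) :
    (∏ i, x i)⁻¹ = ∑ σ : Perm (Fin n), ∏ j, (∑ i ∈ Iic j, x (σ i))⁻¹ := by
  rw [inv_prod_eq_sum_perm_prod_inv_sum_Ici x hx0 hxtop,
    ← Equiv.sum_comp (Equiv.mulRight Fin.revPerm)]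
  refine sum_congr rfl fun σ _ => ?_
  rw [← Equiv.prod_comp Fin.revPerm]
  refine prod_congr rfl fun j _ => ?_
  rw [← Fin.rev_rev j, ← Fin.map_revPerm_Ici, sum_map]
  simp

theorem inv_prod_mul_sum_pow_le {n : ℕ} (x : Fin (n + 1) → ℝ≥0∞) (hx : ∀ i, 1 ≤ x i)
    (m : ℕ) :
    ((∏ i, x i) * (∑ i, x i) ^ (m + 1))⁻¹ ≤
      ((∏ i, x i) ^ (1 + ((n : ℝ) + 1)⁻¹))⁻¹ := by
  have hle (i : Fin (n + 1)) : x i ≤ ∑ i, x i := single_le_sum (fun _ _ => bot_le) (mem_univ i)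
  have hprod : (∏ i, x i) ^ ((n : ℝ) + 1)⁻¹ ≤ ∑ i, x i := by
    rw [rpow_inv_le_iff (by positivity), ← Nat.cast_add_one, rpow_natCast]
    simpa using prod_le_pow_card univ x _ fun i _ => hle i
  have hsum : ∑ i, x i ≤ (∑ i, x i) ^ (m + 1) :=
    le_self_pow₀ ((hx 0).trans (hle 0)) (Nat.succ_ne_zero m)
  refine ENNReal.inv_le_inv.2 ?_
  rw [rpow_add_of_nonneg _ _ zero_le_one (by positivity), rpow_one]
  gcongr
  exact hprod.trans hsum

theorem tsum_inv_natCast_add_one_rpow_ne_top {p : ℝ} (hp : 1 < p) :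
    ∑' j : ℕ, (((j : ℝ≥0∞) + 1) ^ p)⁻¹ ≠ ∞ := by
  have hsummable : Summable fun j : ℕ => (((j : ℝ) + 1) ^ p)⁻¹ := by
    simpa [Function.comp_def] using
      (Real.summable_nat_rpow_inv.2 hp).comp_injective Nat.succ_injective
  have hterm (j : ℕ) :
      (((j : ℝ≥0∞) + 1) ^ p)⁻¹ = ENNReal.ofReal ((((j : ℝ) + 1) ^ p)⁻¹) := by
    rw [ofReal_inv_of_pos (by positivity), ← ofReal_rpow_of_pos (by positivity),
      ofReal_add (by positivity) zero_le_one, ofReal_natCast, ofReal_one]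
  simp only [hterm, ← ofReal_tsum_of_nonneg (fun _ => by positivity) hsummable, ofReal_ne_top,
    ne_eq, not_false_eq_true]

end ENNReal

section PartialSums

variable {n : ℕ}

def partialSumSucc (k : Fin n → ℕ) (j : Fin n) : ℕ := ∑ i ∈ Iic j, (k i + 1)

theorem partialSumSucc_strictMono (k : Fin n → ℕ) : StrictMono (partialSumSucc k) :=
  fun _ _ hj => sum_lt_sum_of_subset (Iic_subset_Iic.2 hj.le) (mem_Iic.2 le_rfl)
    (fun h => (mem_Iic.1 h).not_gt hj) (Nat.succ_pos _) fun _ _ _ => Nat.zero_le _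

theorem partialSumSucc_pos (k : Fin n → ℕ) (j : Fin n) : 0 < partialSumSucc k j :=
  sum_pos (fun _ _ => Nat.succ_pos _) ⟨j, mem_Iic.2 le_rfl⟩

theorem partialSumSucc_zero (k : Fin n → ℕ) (h : 0 < n) :
    partialSumSucc k ⟨0, h⟩ = k ⟨0, h⟩ + 1 := by
  have : Iic (⟨0, h⟩ : Fin n) = {⟨0, h⟩} := by ext; simp [Fin.le_def, Fin.ext_iff]
  rw [partialSumSucc, this, sum_singleton]

theorem partialSumSucc_succ (k : Fin n → ℕ) {v : ℕ} (h : v + 1 < n) :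
    partialSumSucc k ⟨v + 1, h⟩ =
      partialSumSucc k ⟨v, by omega⟩ + (k ⟨v + 1, h⟩ + 1) := by
  have : Iic (⟨v + 1, h⟩ : Fin n) = insert ⟨v + 1, h⟩ (Iic ⟨v, by omega⟩) := by
    ext; simp only [mem_Iic, mem_insert, Fin.le_def, Fin.ext_iff]; omega
  rw [partialSumSucc, this, sum_insert (by simp [Fin.le_def]), add_comm]
  rfl

theorem partialSumSucc_last (k : Fin (n + 1) → ℕ) :
    partialSumSucc k (Fin.last n) = ∑ i, (k i + 1) := by
  rw [partialSumSucc, show Iic (Fin.last n) = univ from Iic_top]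

def succDiff (f : Fin n → ℕ) (j : Fin n) : ℕ :=
  f j - (if h : (j : ℕ) = 0 then 0 else f ⟨j - 1, by omega⟩) - 1

theorem succDiff_partialSumSucc (k : Fin n → ℕ) : succDiff (partialSumSucc k) = k := by
  funext ⟨v, hv⟩
  cases v with
  | zero => simp [succDiff, partialSumSucc_zero k hv]
  | succ v => simp [succDiff, partialSumSucc_succ k hv]

theorem partialSumSucc_succDiff {f : Fin n → ℕ} (hf : StrictMono f) (hpos : ∀ i, 0 < f i) :
    partialSumSucc (succDiff f) = f := by
  funext ⟨v, hv⟩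
  induction v with
  | zero =>
    have := hpos ⟨0, hv⟩
    simp only [partialSumSucc_zero _ hv, succDiff, dite_true]
    omega
  | succ v ih =>
    have : f ⟨v, by omega⟩ < f ⟨v + 1, hv⟩ := hf (by simp [Fin.lt_def])
    rw [partialSumSucc_succ _ hv, ih (by omega)]
    simp only [succDiff, Nat.succ_ne_zero, dite_false, Nat.add_sub_cancel]
    omega

def partialSumSuccEquiv (n : ℕ) :
    (Fin n → ℕ) ≃ {f : Fin n → ℕ // StrictMono f ∧ ∀ i, 0 < f i} where
  toFun k := ⟨partialSumSucc k, partialSumSucc_strictMono k, partialSumSucc_pos k⟩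
  invFun f := succDiff f.1
  left_inv := succDiff_partialSumSucc
  right_inv f := Subtype.ext (partialSumSucc_succDiff f.2.1 f.2.2)

end PartialSums

def onesThen (n b : ℕ) (i : Fin n) : ℕ := if (i : ℕ) + 1 = n then b else 1

theorem zetaOnes_eq_mzv_onesThen (n b : ℕ) : zetaOnes n b = mzv (onesThen n b) := rfl

theorem prod_pow_onesThen {M : Type*} [CommMonoid M] {n : ℕ} (P : Fin (n + 1) → M) (b : ℕ) :
    ∏ j, P j ^ onesThen (n + 1) (b + 1) j = (∏ j, P j) * P (Fin.last n) ^ b := by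
  have hinit (i : Fin n) : onesThen (n + 1) (b + 1) i.castSucc = 1 := by
    simp [onesThen, i.isLt.ne]
  have hlast : onesThen (n + 1) (b + 1) (Fin.last n) = b + 1 := by simp [onesThen]
  rw [Fin.prod_univ_castSucc, Fin.prod_univ_castSucc, hlast, pow_succ']
  simp only [hinit, pow_one]
  ac_rfl

theorem mzv_eq_toReal_tsum {k : ℕ} (e : Fin k → ℕ) :
    mzv e = (∑' f : {f : Fin k → ℕ // StrictMono f ∧ ∀ i, 0 < f i},
      ∏ i, ((f.1 i : ℝ≥0∞) ^ e i)⁻¹).toReal := by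
  rw [ENNReal.tsum_toReal_eq fun f => ENNReal.prod_ne_top fun i _ =>
    ENNReal.inv_ne_top.2 (pow_ne_zero _ (Nat.cast_ne_zero.2 (f.2.2 i).ne'))]
  simp [mzv, ENNReal.toReal_prod]

section LogMomentSeries

open ENNReal

theorem inv_prod_mul_sum_pow_eq_sum_perm {n : ℕ} (k : Fin (n + 1) → ℕ) (m : ℕ) :
    ((∏ i, ((k i : ℝ≥0∞) + 1)) * (∑ i, ((k i : ℝ≥0∞) + 1)) ^ (m + 1))⁻¹ =
      ∑ σ : Perm (Fin (n + 1)),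
        ∏ j, ((partialSumSucc (k ∘ σ) j : ℝ≥0∞) ^ onesThen (n + 1) (m + 2) j)⁻¹ := by
  have hx0 (i : Fin (n + 1)) : (k i : ℝ≥0∞) + 1 ≠ 0 := by simp
  have hxtop (i : Fin (n + 1)) : (k i : ℝ≥0∞) + 1 ≠ ∞ := by simp
  have hP (σ : Perm (Fin (n + 1))) (j : Fin (n + 1)) :
      (partialSumSucc (k ∘ σ) j : ℝ≥0∞) =
        ∑ i ∈ Iic j, ((k (σ i) : ℝ≥0∞) + 1) := by
    simp [partialSumSucc]
  have hPlast (σ : Perm (Fin (n + 1))) :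
      (partialSumSucc (k ∘ σ) (Fin.last n) : ℝ≥0∞) = ∑ i, ((k i : ℝ≥0∞) + 1) := by
    rw [partialSumSucc_last]
    push_cast
    exact Equiv.sum_comp σ fun i => (k i : ℝ≥0∞) + 1
  rw [ENNReal.mul_inv (.inl (prod_ne_zero_iff.2 fun i _ => hx0 i))
      (.inl (prod_ne_top fun i _ => hxtop i)),
    inv_prod_eq_sum_perm_prod_inv_sum_Iic _ hx0 hxtop, sum_mul]
  refine sum_congr rfl fun σ _ => ?_
  rw [← prod_inv_distrib (f := fun j => (partialSumSucc (k ∘ σ) j : ℝ≥0∞) ^ _)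
      fun _ _ _ _ _ => .inr (by simp), prod_pow_onesThen,
    ENNReal.mul_inv (.inr (by simp)) (.inl (prod_ne_top fun _ _ => natCast_ne_top _)),
    prod_inv_distrib fun _ _ _ _ _ => .inr (by simp), hPlast]
  simp only [hP]

theorem tsum_inv_prod_mul_sum_pow_eq (n m : ℕ) :
    ∑' k : Fin (n + 1) → ℕ,
        ((∏ i, ((k i : ℝ≥0∞) + 1)) * (∑ i, ((k i : ℝ≥0∞) + 1)) ^ (m + 1))⁻¹ =
      (n + 1)! * ∑' f : {f : Fin (n + 1) → ℕ // StrictMono f ∧ ∀ i, 0 < f i},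
        ∏ j, ((f.1 j : ℝ≥0∞) ^ onesThen (n + 1) (m + 2) j)⁻¹ := by
  set F : (Fin (n + 1) → ℕ) → ℝ≥0∞ := fun f =>
    ∏ j, ((f j : ℝ≥0∞) ^ onesThen (n + 1) (m + 2) j)⁻¹
  have hperm (σ : Perm (Fin (n + 1))) :
      ∑' k : Fin (n + 1) → ℕ, F (partialSumSucc (k ∘ σ)) = ∑' k, F (partialSumSucc k) :=
    (σ.symm.arrowCongr (.refl ℕ)).tsum_eq fun k => F (partialSumSucc k)
  calc _ = ∑' k : Fin (n + 1) → ℕ, ∑ σ : Perm (Fin (n + 1)),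
          F (partialSumSucc (k ∘ σ)) :=
        tsum_congr fun k => inv_prod_mul_sum_pow_eq_sum_perm k m
    _ = ∑ σ : Perm (Fin (n + 1)), ∑' k : Fin (n + 1) → ℕ, F (partialSumSucc k) := by
        rw [Summable.tsum_finsetSum fun _ _ => ENNReal.summable]
        exact sum_congr rfl fun σ _ => hperm σ
    _ = _ := by
        rw [sum_const, card_univ, Fintype.card_perm, Fintype.card_fin, nsmul_eq_mul,
          ← (partialSumSuccEquiv (n + 1)).tsum_eq]
        rfl

theorem tsum_inv_prod_mul_sum_pow_lt_top (n m : ℕ) :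
    ∑' k : Fin (n + 1) → ℕ,
      ((∏ i, ((k i : ℝ≥0∞) + 1)) * (∑ i, ((k i : ℝ≥0∞) + 1)) ^ (m + 1))⁻¹
      < ∞ := by
  set p : ℝ := 1 + ((n : ℝ) + 1)⁻¹
  have hp : 1 < p := lt_add_of_pos_right 1 (by positivity)
  have hbound (k : Fin (n + 1) → ℕ) :
      ((∏ i, ((k i : ℝ≥0∞) + 1)) * (∑ i, ((k i : ℝ≥0∞) + 1)) ^ (m + 1))⁻¹ ≤
        ∏ i, (((k i : ℝ≥0∞) + 1) ^ p)⁻¹ := by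
    rw [← prod_inv_distrib fun _ _ _ _ _ => .inr (by simp),
      prod_rpow_of_nonneg (by positivity)]
    exact ENNReal.inv_prod_mul_sum_pow_le _ (fun _ => le_add_self) m
  refine (ENNReal.tsum_le_tsum hbound).trans_lt ?_
  rw [tsum_pi_prod_eq_prod_tsum fun _ (j : ℕ) => (((j : ℝ≥0∞) + 1) ^ p)⁻¹]
  exact prod_lt_top fun _ _ =>
    (tsum_inv_natCast_add_one_rpow_ne_top hp).lt_top

end LogMomentSeries

section Integrals

open Real

theorem neg_log_pow_mul_neg_log_one_sub_pow_div_nonneg (m n : ℕ) {x : ℝ}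
    (hx : x ∈ Set.Ioo 0 1) : 0 ≤ (-log x) ^ m * (-log (1 - x)) ^ n / x := by
  have : 0 ≤ -log x := neg_nonneg.2 (log_nonpos hx.1.le hx.2.le)
  have : 0 ≤ -log (1 - x) := neg_nonneg.2 (log_nonpos (by linarith [hx.2]) (by linarith [hx.1]))
  have : 0 < x := hx.1
  positivity

theorem integral_Ioi_pow_mul_exp_neg_mul (m : ℕ) {r : ℝ} (hr : 0 < r) :
    ∫ t in Set.Ioi 0, t ^ m * exp (-(r * t)) = m ! / r ^ (m + 1) := by
  have h := integral_rpow_mul_exp_neg_mul_Ioi (a := m + 1) (by positivity) hr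
  simp only [add_sub_cancel_right, Real.rpow_natCast, Gamma_nat_eq_factorial] at h
  rw [← Nat.cast_add_one, Real.rpow_natCast] at h
  rw [h, one_div, inv_pow, inv_mul_eq_div]

theorem integrableOn_Ioi_pow_mul_exp_neg_mul (m : ℕ) {r : ℝ} (hr : 0 < r) :
    IntegrableOn (fun t => t ^ m * exp (-(r * t))) (Set.Ioi 0) :=
  Integrable.of_integral_ne_zero <| by
    rw [integral_Ioi_pow_mul_exp_neg_mul m hr]
    positivity

theorem lintegral_Ioo_neg_log_pow_mul_pow_div (m : ℕ) {S : ℕ} (hS : 0 < S) :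
    ∫⁻ x in Set.Ioo 0 1, ENNReal.ofReal ((-log x) ^ m * x ^ S / x) =
      m ! / (S : ℝ≥0∞) ^ (m + 1) := by
  have himage : (fun t => exp (-t)) '' Set.Ioi 0 = Set.Ioo 0 1 := by
    ext x
    constructor
    · rintro ⟨t, ht, rfl⟩
      exact ⟨exp_pos _, exp_lt_one_iff.2 (neg_lt_zero.2 ht)⟩
    · rintro ⟨hx0, hx1⟩
      exact ⟨-log x, neg_pos.2 (log_neg hx0 hx1), by simp [exp_log hx0]⟩
  have hderiv (t : ℝ) (_ : t ∈ Set.Ioi 0) :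
      HasDerivWithinAt (fun t => exp (-t)) (-exp (-t)) (Set.Ioi 0) t := by
    simpa using ((hasDerivAt_neg t).exp).hasDerivWithinAt
  have hinj : Set.InjOn (fun t => exp (-t)) (Set.Ioi 0) :=
    fun _ _ _ _ h => neg_injective (exp_injective h)
  have hsubst (t : ℝ) : ENNReal.ofReal |-exp (-t)| *
      ENNReal.ofReal ((-log (exp (-t))) ^ m * exp (-t) ^ S / exp (-t)) =
        ENNReal.ofReal (t ^ m * exp (-(S * t))) := by
    rw [← ENNReal.ofReal_mul (abs_nonneg _), abs_neg, abs_of_pos (exp_pos _), log_exp, neg_neg,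
      mul_div_cancel₀ _ (exp_ne_zero _), ← exp_nat_mul, mul_neg]
  rw [← himage, lintegral_image_eq_lintegral_abs_deriv_mul measurableSet_Ioi hderiv hinj]
  simp only [hsubst]
  have hS' : (0 : ℝ) < S := Nat.cast_pos.2 hS
  rw [← ofReal_integral_eq_lintegral_ofReal (integrableOn_Ioi_pow_mul_exp_neg_mul m hS')
      ((ae_restrict_iff' measurableSet_Ioi).2 (.of_forall fun t ht => by
        have : (0 : ℝ) < t := ht
        positivity)),
    integral_Ioi_pow_mul_exp_neg_mul m hS', ENNReal.ofReal_div_of_pos (by positivity),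
    ENNReal.ofReal_natCast, ENNReal.ofReal_pow hS'.le, ENNReal.ofReal_natCast]

theorem ofReal_neg_log_one_sub_pow {x : ℝ} (hx0 : 0 ≤ x) (hx1 : x < 1) (n : ℕ) :
    ENNReal.ofReal ((-log (1 - x)) ^ n) =
      ∑' k : Fin n → ℕ,
        ENNReal.ofReal (x ^ (∑ i, (k i + 1))) * (∏ i, ((k i : ℝ≥0∞) + 1))⁻¹ := by
  have hsum := hasSum_pow_div_log_of_abs_lt_one (by rwa [abs_of_nonneg hx0])
  have hterm (j : ℕ) :
      ENNReal.ofReal (x ^ (j + 1) / (j + 1)) =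
        ENNReal.ofReal (x ^ (j + 1)) * ((j : ℝ≥0∞) + 1)⁻¹ := by
    rw [div_eq_mul_inv, ENNReal.ofReal_mul (by positivity),
      ENNReal.ofReal_inv_of_pos (by positivity)]
    norm_cast
  rw [ENNReal.ofReal_pow (hsum.nonneg fun _ => by positivity), ← hsum.tsum_eq,
    ENNReal.ofReal_tsum_of_nonneg (fun _ => by positivity) hsum.summable, ← Fin.prod_const,
    ← ENNReal.tsum_pi_prod_eq_prod_tsum fun _ (j : ℕ) => ENNReal.ofReal (x ^ (j + 1) / (j + 1))]
  refine tsum_congr fun k => ?_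
  rw [ENNReal.prod_inv_distrib fun _ _ _ _ _ => .inr (by simp), ← prod_pow_eq_pow_sum,
    ENNReal.ofReal_prod_of_nonneg fun _ _ => by positivity, ← prod_mul_distrib]
  simp only [hterm]

theorem lintegral_neg_log_pow_mul_neg_log_one_sub_pow (m n : ℕ) :
    ∫⁻ x in Set.Ioo 0 1, ENNReal.ofReal ((-log x) ^ m * (-log (1 - x)) ^ (n + 1) / x) =
      m ! * ∑' k : Fin (n + 1) → ℕ,
        ((∏ i, ((k i : ℝ≥0∞) + 1)) * (∑ i, ((k i : ℝ≥0∞) + 1)) ^ (m + 1))⁻¹ := by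
  have hexpand (x : ℝ) (hx : x ∈ Set.Ioo 0 1) :
      ENNReal.ofReal ((-log x) ^ m * (-log (1 - x)) ^ (n + 1) / x) =
        ∑' k : Fin (n + 1) → ℕ, ENNReal.ofReal ((-log x) ^ m * x ^ (∑ i, (k i + 1)) / x) *
          (∏ i, ((k i : ℝ≥0∞) + 1))⁻¹ := by
    have hlog : 0 ≤ -log x := neg_nonneg.2 (log_nonpos hx.1.le hx.2.le)
    have hx0 : 0 < x := hx.1
    rw [mul_div_right_comm, ENNReal.ofReal_mul (by positivity),
      ofReal_neg_log_one_sub_pow hx0.le hx.2, ← ENNReal.tsum_mul_left]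
    refine tsum_congr fun k => ?_
    rw [← mul_assoc, ← ENNReal.ofReal_mul (by positivity), mul_div_right_comm]
  have hmeas (k : Fin (n + 1) → ℕ) : Measurable fun x : ℝ =>
      ENNReal.ofReal ((-log x) ^ m * x ^ (∑ i, (k i + 1)) / x) *
        (∏ i, ((k i : ℝ≥0∞) + 1))⁻¹ := by
    fun_prop
  rw [setLIntegral_congr_fun measurableSet_Ioo hexpand,
    lintegral_tsum fun k => (hmeas k).aemeasurable, ← ENNReal.tsum_mul_left]
  refine tsum_congr fun k => ?_
  rw [lintegral_mul_const _ (by fun_prop),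
    lintegral_Ioo_neg_log_pow_mul_pow_div m (by positivity),
    ENNReal.mul_inv (.inr (by simp)) (.inl (ENNReal.prod_ne_top fun _ _ => by simp))]
  push_cast
  rw [div_eq_mul_inv]
  ring

end Integrals

theorem neg_one_pow_add_mul_neg_pow_mul_neg_pow {R : Type*} [CommRing R] (m n : ℕ) (a b : R) :
    (-1) ^ (m + n) * ((-a) ^ m * (-b) ^ n) = a ^ m * b ^ n := by
  rw [pow_add, mul_mul_mul_comm, ← mul_pow, ← mul_pow]
  simp

/-- **Logarithmic moments as multiple zeta values.** For `m ≥ 0`, `n ≥ 1`, the integral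
`∫₀¹ log^m(x)·log^n(1-x) dx/x` converges absolutely and equals
`(-1)^{m+n}·m!·n!·ζ({1}^{n-1}, m+2)`. -/
theorem log_moment_integral_eq_mzv (m n : ℕ) (hn : 1 ≤ n) :
    IntervalIntegrable
      (fun x : ℝ => (Real.log x) ^ m * (Real.log (1 - x)) ^ n / x) volume 0 1 ∧
    ∫ x in (0 : ℝ)..1, (Real.log x) ^ m * (Real.log (1 - x)) ^ n / x =
      (-1 : ℝ) ^ (m + n) * m.factorial * n.factorial * zetaOnes n (m + 2) := by
  obtain ⟨n, rfl⟩ := Nat.exists_eq_add_of_le' hn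
  set g : ℝ → ℝ := fun x => (-Real.log x) ^ m * (-Real.log (1 - x)) ^ (n + 1) / x
  have hg_nonneg : 0 ≤ᵐ[volume.restrict (Set.Ioo 0 1)] g :=
    (ae_restrict_iff' measurableSet_Ioo).2 <| .of_forall fun _ hx =>
      neg_log_pow_mul_neg_log_one_sub_pow_div_nonneg m (n + 1) hx
  have hg_meas : AEStronglyMeasurable g (volume.restrict (Set.Ioo 0 1)) := by
    fun_prop
  have hg_lintegral := lintegral_neg_log_pow_mul_neg_log_one_sub_pow m n
  have hg_int : IntegrableOn g (Set.Ioo 0 1) :=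
    ⟨hg_meas, (hasFiniteIntegral_iff_ofReal hg_nonneg).2 <| by
      rw [hg_lintegral]
      exact ENNReal.mul_lt_top (ENNReal.natCast_lt_top _) (tsum_inv_prod_mul_sum_pow_lt_top n m)⟩
  have hsign : (fun x : ℝ => Real.log x ^ m * Real.log (1 - x) ^ (n + 1) / x) =
      fun x => (-1) ^ (m + (n + 1)) * g x :=
    funext fun x => by rw [← mul_div_assoc, neg_one_pow_add_mul_neg_pow_mul_neg_pow]
  rw [hsign, intervalIntegrable_iff_integrableOn_Ioo_of_le zero_le_one,
    intervalIntegral.integral_of_le zero_le_one, integral_Ioc_eq_integral_Ioo, integral_const_mul,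
    integral_eq_lintegral_of_nonneg_ae hg_nonneg hg_meas, hg_lintegral,
    tsum_inv_prod_mul_sum_pow_eq, zetaOnes_eq_mzv_onesThen, mzv_eq_toReal_tsum]
  refine ⟨hg_int.const_mul _, ?_⟩
  simp only [ENNReal.toReal_mul, ENNReal.toReal_natCast]
  ring
end

section
/- In the cohomology algebra of the configuration space Conf(m, ℂ) of m distinct points in ℂ, generated by the classes ω_{ij} = dlog(z_j - z_i), any product ω_{i₁j₁}∧⋯∧ω_{i_r j_r} vanishes whenever the graph on vertex set {1,…,m} with edges {i₁,j₁},…,{i_r,j_r} contains a cycle. In particular, the Arnol'd relation ω_{ij}∧ω_{jk} + ω_{jk}∧ω_{ki} + ω_{ki}∧ω_{ij} = 0 holds. -/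
set_option synthInstance.maxHeartbeats 400000
set_option maxHeartbeats 1000000

/-- The (pointwise value at the configuration `z` of the) logarithmic 1-form
`ω_{ij} = dlog(z_j - z_i)` on `Conf(m, ℂ)`, viewed as a degree-one element
`(dz_j - dz_i)/(z_j - z_i)` of the exterior algebra of the cotangent space. -/
noncomputable def omegaForm {m : ℕ} (z : Fin m → ℂ) (i j : Fin m) :
    ExteriorAlgebra ℂ (Module.Dual ℂ (Fin m → ℂ)) :=
  ExteriorAlgebra.ι ℂ
    ((z j - z i)⁻¹ •
      (LinearMap.proj (R := ℂ) (φ := fun _ : Fin m => ℂ) j -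
        LinearMap.proj (R := ℂ) (φ := fun _ : Fin m => ℂ) i))

private lemma arnold_triangle {m : ℕ} (z : Fin m → ℂ) (hz : Function.Injective z)
    (i j l : Fin m) (hij : i ≠ j) (hjl : j ≠ l) (hli : l ≠ i) :
    omegaForm z i j * omegaForm z j l + omegaForm z j l * omegaForm z l i +
      omegaForm z l i * omegaForm z i j = 0 := by
  set p : Fin m → Module.Dual ℂ (Fin m → ℂ) :=
    fun t => LinearMap.proj (R := ℂ) (φ := fun _ : Fin m => ℂ) t with hp
  set a : ℂ := z j - z i with ha
  set b : ℂ := z l - z j with hb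
  set d : ℂ := z i - z l with hd
  have ha0 : a ≠ 0 := sub_ne_zero.mpr fun h => hij (hz h).symm
  have hb0 : b ≠ 0 := sub_ne_zero.mpr fun h => hjl (hz h).symm
  have hd0 : d ≠ 0 := sub_ne_zero.mpr fun h => hli (hz h).symm
  have habd : a + b + d = 0 := by rw [ha, hb, hd]; ring
  set X : ExteriorAlgebra ℂ (Module.Dual ℂ (Fin m → ℂ)) :=
    ExteriorAlgebra.ι ℂ (p j - p i) with hX
  set Y : ExteriorAlgebra ℂ (Module.Dual ℂ (Fin m → ℂ)) :=
    ExteriorAlgebra.ι ℂ (p l - p j) with hY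
  have hZ : ExteriorAlgebra.ι ℂ (p i - p l) = -X - Y := by
    have h : p i - p l = -(p j - p i) - (p l - p j) := by abel
    rw [h, map_sub, map_neg, hX, hY]
  have hω1 : omegaForm z i j = a⁻¹ • X := by rw [omegaForm, map_smul, hX]
  have hω2 : omegaForm z j l = b⁻¹ • Y := by rw [omegaForm, map_smul, hY]
  have hω3 : omegaForm z l i = d⁻¹ • (-X - Y) := by rw [omegaForm, map_smul, hZ]
  have hXX : X * X = 0 := ExteriorAlgebra.ι_sq_zero _
  have hYY : Y * Y = 0 := ExteriorAlgebra.ι_sq_zero _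
  have hswap : X * Y + Y * X = 0 := ExteriorAlgebra.ι_add_mul_swap _ _
  have hYX : Y * X = - (X * Y) := eq_neg_of_add_eq_zero_right hswap
  have coeff : a⁻¹ * b⁻¹ + b⁻¹ * d⁻¹ + d⁻¹ * a⁻¹ = 0 := by
    field_simp
    linear_combination habd
  rw [hω1, hω2, hω3]
  rw [smul_mul_smul_comm, smul_mul_smul_comm, smul_mul_smul_comm]
  have e1 : Y * (-X - Y) = X * Y := by
    rw [mul_sub, mul_neg, hYX, hYY]; simp
  have e2 : (-X - Y) * X = X * Y := by
    rw [sub_mul, neg_mul, hXX, hYX]; simp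
  rw [e1, e2, ← add_smul, ← add_smul, coeff, zero_smul]

/-- **Arnol'd vanishing along cycles.** In the cohomology algebra of `Conf(m, ℂ)`,
generated by the `ω_{ij} = dlog(z_j - z_i)`, any product
`ω_{i₁j₁} ∧ ⋯ ∧ ω_{i_rj_r}` vanishes whenever the corresponding graph contains a
cycle: for a cycle `c₀ → c₁ → ⋯ → c_{k-1} → c₀` the wedge
`ω_{c₀c₁} ∧ ⋯ ∧ ω_{c_{k-1}c₀}` vanishes (pointwise, hence as a form).  In
particular the Arnol'd relation
`ω_{ij}∧ω_{jl} + ω_{jl}∧ω_{li} + ω_{li}∧ω_{ij} = 0` holds. -/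
theorem arnold_cycle_vanishing (m k : ℕ) (z : Fin m → ℂ)
    (hz : Function.Injective z) (c : Fin (k + 3) → Fin m)
    (hc : ∀ a, c a ≠ c (a + 1)) :
    (List.ofFn (fun a : Fin (k + 3) => omegaForm z (c a) (c (a + 1)))).prod = 0 ∧
    ∀ i j l : Fin m, i ≠ j → j ≠ l → l ≠ i →
      omegaForm z i j * omegaForm z j l + omegaForm z j l * omegaForm z l i +
        omegaForm z l i * omegaForm z i j = 0 := by
  constructor
  · set p : Fin m → Module.Dual ℂ (Fin m → ℂ) :=
      fun t => LinearMap.proj (R := ℂ) (φ := fun _ : Fin m => ℂ) t with hp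
    set v : Fin (k + 3) → Module.Dual ℂ (Fin m → ℂ) :=
      fun a => (z (c (a + 1)) - z (c a))⁻¹ • (p (c (a + 1)) - p (c a)) with hv
    have key : (List.ofFn fun a : Fin (k + 3) => ExteriorAlgebra.ι ℂ (v a)).prod =
        ExteriorAlgebra.ιMulti ℂ (k + 3) v := (ExteriorAlgebra.ιMulti_apply v).symm
    have hdep : ¬ LinearIndependent ℂ v := by
      rw [Fintype.linearIndependent_iff]
      push_neg
      refine ⟨fun a => z (c (a + 1)) - z (c a), ?_, 0, ?_⟩
      · have hne : ∀ a : Fin (k + 3), z (c (a + 1)) - z (c a) ≠ 0 :=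
          fun a => sub_ne_zero.mpr fun h => hc a (hz h).symm
        have : ∀ a : Fin (k + 3), (z (c (a + 1)) - z (c a)) • v a
            = p (c (a + 1)) - p (c a) := by
          intro a
          rw [hv]
          simp only [smul_smul, mul_inv_cancel₀ (hne a), one_smul]
        rw [Finset.sum_congr rfl fun a _ => this a]
        rw [Finset.sum_sub_distrib]
        rw [sub_eq_zero]
        exact Fintype.sum_equiv (Equiv.addRight (1 : Fin (k + 3)))
          (fun a => p (c (a + 1))) (fun a => p (c a)) (fun a => rfl)
      · exact sub_ne_zero.mpr fun h => hc 0 (hz h).symm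
    have hlist : (List.ofFn fun a : Fin (k + 3) => omegaForm z (c a) (c (a + 1)))
        = List.ofFn (fun a => ExteriorAlgebra.ι ℂ (v a)) := rfl
    rw [hlist, key]
    exact AlternatingMap.map_linearDependent _ v hdep
  · exact fun i j l hij hjl hli => arnold_triangle z hz i j l hij hjl hli
end
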